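/- arXiv:1211.5621 — 3 statements merged into one kernel-verified Lean document; each statement's English description precedes it below -/
import Mathlib

section
/- Let $G$ be a finite abelian group and $\k$ an algebraically closed field of characteristic 0. The antisymmetrization map $\underline{a}: Z^2(G,\k^{\bullet}) \to \mathrm{Alt}(G)$, defined by $\underline{a}(z)(a,b) = z(a,b)z(b,a)^{-1}$, is a group homomorphism whose kernel is exactly the group of 2-coboundaries $B^2(G,\k^{\bullet})$, and whose image is the group $\mathrm{Alt}(G)$ of alternating bimultiplicative functions $G \times G \to \k^{\bullet}$. -/
/-!
Antisymmetrization is multiplicative, and it kills coboundaries because `kˣ` is commutative.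
A cocycle `z` with trivial antisymmetrization is symmetric, so `(c, a) * (d, b) = (c d z(a,b), a b)`
is an abelian extension `E` of `G` by `kˣ`. As `k` is algebraically closed, `kˣ` is divisible,
hence an injective `ℤ`-module, so `kˣ → E` has a retraction `r`, and `a ↦ r (1, a)` trivializes `z`.

The antisymmetrization of a cocycle is alternating and bimultiplicative. Conversely, write `G` as a
product of cyclic groups. Alternating forms on a cyclic group are trivial. On `G × H` the form `β`
is `Z / Zᵀ` for `Z` the sum of the lifts on the two factors and the cross term
`β ((a, 1), (1, b'))`, which is counted on one side only.
-/

/-- normalized 2-cocycle condition (trivial action) with values in `kˣ` -/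
def IsCocycle2 {G k : Type*} [CommGroup G] [Field k] (z : G → G → kˣ) : Prop :=
  ∀ a b c, z a (b * c) * z b c = z (a * b) c * z a b

/-- 2-coboundary condition -/
def IsCoboundary2 {G k : Type*} [CommGroup G] [Field k] (z : G → G → kˣ) : Prop :=
  ∃ f : G → kˣ, ∀ a b, z a b = f a * f b * (f (a * b))⁻¹

/-- alternating bimultiplicative function -/
def IsAltForm {G k : Type*} [CommGroup G] [Field k] (β : G → G → kˣ) : Prop :=
  (∀ a b c, β (a * b) c = β a c * β b c) ∧
  (∀ a b c, β a (b * c) = β a b * β a c) ∧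
  (∀ a, β a a = 1)

/-- the antisymmetrization map -/
def antisym {G k : Type*} [CommGroup G] [Field k] (z : G → G → kˣ) : G → G → kˣ :=
  fun a b => z a b * (z b a)⁻¹

open Function

section Antisym

variable {G k : Type*} [CommGroup G] [Field k]

theorem antisym_mul (z w : G → G → kˣ) :
    antisym (fun a b => z a b * w a b) = fun a b => antisym z a b * antisym w a b := by
  funext a b
  simp only [antisym, mul_inv, mul_mul_mul_comm]

theorem antisym_self (z : G → G → kˣ) (a : G) : antisym z a a = 1 :=
  mul_inv_cancel _

theorem antisym_swap (z : G → G → kˣ) (a b : G) : antisym z b a = (antisym z a b)⁻¹ := by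
  simp [antisym]

theorem antisym_eq_one_iff {z : G → G → kˣ} :
    (antisym z = fun _ _ => 1) ↔ ∀ a b, z a b = z b a := by
  simp only [funext_iff, antisym, mul_inv_eq_one]

theorem IsCoboundary2.antisym_eq_one {z : G → G → kˣ} (hz : IsCoboundary2 z) :
    antisym z = fun _ _ => 1 := by
  obtain ⟨f, hf⟩ := hz
  exact antisym_eq_one_iff.mpr fun a b => by rw [hf, hf, mul_comm a, mul_comm (f a)]

theorem IsCocycle2.apply_one_left {z : G → G → kˣ} (hz : IsCocycle2 z) (a : G) :
    z 1 a = z 1 1 := by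
  simpa using hz 1 1 a

theorem IsCocycle2.antisym_mul_left {z : G → G → kˣ} (hz : IsCocycle2 z) (a b c : G) :
    antisym z (a * b) c = antisym z a c * antisym z b c := by
  have e₁ : z (a * b) c = z a (b * c) * z b c * (z a b)⁻¹ := eq_mul_inv_of_mul_eq (hz a b c).symm
  have e₂ : z c (a * b) = z (a * c) b * z c a * (z a b)⁻¹ := by
    have := hz c a b
    rw [mul_comm c a] at this
    exact eq_mul_inv_of_mul_eq this
  have e₃ : z (a * c) b = z a (b * c) * z c b * (z a c)⁻¹ := by
    have := hz a c b
    rw [mul_comm c b] at this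
    exact eq_mul_inv_of_mul_eq this.symm
  simp only [antisym, e₁, e₂, e₃]
  rw [← Units.val_inj]
  push_cast [Units.val_inv_eq_inv_val]
  field_simp

theorem IsCocycle2.isAltForm_antisym {z : G → G → kˣ} (hz : IsCocycle2 z) :
    IsAltForm (antisym z) := by
  refine ⟨hz.antisym_mul_left, fun a b c => ?_, antisym_self z⟩
  rw [antisym_swap z (b * c), hz.antisym_mul_left, mul_inv, ← antisym_swap, ← antisym_swap]

theorem isCocycle2_monoidHom₂ (Z : G →* G →* kˣ) : IsCocycle2 fun a b => Z a b := by
  intro a b c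
  simp only [map_mul, MonoidHom.mul_apply, mul_comm, mul_left_comm]

end Antisym

section AltForms

variable {M G H : Type*} [CommGroup M] [CommGroup G] [CommGroup H]

theorem mul_apply_swap_eq_one_of_alternating {B : G →* G →* M} (hB : ∀ a, B a a = 1) (a b : G) :
    B a b * B b a = 1 := by
  simpa [hB] using hB (a * b)

theorem eq_one_of_alternating_of_isCyclic [IsCyclic G] {B : G →* G →* M}
    (hB : ∀ a, B a a = 1) : B = 1 := by
  obtain ⟨g, hg⟩ := IsCyclic.exists_generator (α := G)
  ext a b
  obtain ⟨i, rfl⟩ := Subgroup.mem_zpowers_iff.mp (hg a)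
  obtain ⟨j, rfl⟩ := Subgroup.mem_zpowers_iff.mp (hg b)
  simp [hB]

def AltFormsSplit (M G : Type*) [CommGroup M] [CommGroup G] : Prop :=
  ∀ B : G →* G →* M, (∀ a, B a a = 1) → ∃ Z : G →* G →* M, ∀ a b, Z a b / Z b a = B a b

namespace AltFormsSplit

theorem of_isCyclic [IsCyclic G] : AltFormsSplit M G :=
  fun _ hB => ⟨1, by simp [eq_one_of_alternating_of_isCyclic hB]⟩

theorem of_mulEquiv (e : G ≃* H) (h : AltFormsSplit M H) : AltFormsSplit M G := by
  intro B hB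
  obtain ⟨Z, hZ⟩ := h ((B.comp e.symm.toMonoidHom).compl₂ e.symm.toMonoidHom) fun _ => hB _
  exact ⟨(Z.comp e.toMonoidHom).compl₂ e.toMonoidHom, fun a b => by simpa using hZ (e a) (e b)⟩

theorem prod (hG : AltFormsSplit M G) (hH : AltFormsSplit M H) : AltFormsSplit M (G × H) := by
  intro B hB
  let ι₁ := MonoidHom.inl G H
  let ι₂ := MonoidHom.inr G H
  obtain ⟨Z₁, hZ₁⟩ := hG ((B.comp ι₁).compl₂ ι₁) fun _ => hB _
  obtain ⟨Z₂, hZ₂⟩ := hH ((B.comp ι₂).compl₂ ι₂) fun _ => hB _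
  let C := (B.comp ι₁).compl₂ ι₂
  let π₁ := MonoidHom.fst G H
  let π₂ := MonoidHom.snd G H
  refine ⟨(Z₁.comp π₁).compl₂ π₁ * (Z₂.comp π₂).compl₂ π₂ * (C.comp π₁).compl₂ π₂,
    fun p q => ?_⟩
  have hB_split : B p q = B (ι₁ p.1) (ι₁ q.1) * B (ι₂ p.2) (ι₂ q.2) *
      (B (ι₁ p.1) (ι₂ q.2) / B (ι₁ q.1) (ι₂ p.2)) := by
    have hp : p = ι₁ p.1 * ι₂ p.2 := by simp [ι₁, ι₂]
    have hq : q = ι₁ q.1 * ι₂ q.2 := by simp [ι₁, ι₂]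
    have hskew : B (ι₂ p.2) (ι₁ q.1) = (B (ι₁ q.1) (ι₂ p.2))⁻¹ :=
      eq_inv_of_mul_eq_one_left (mul_apply_swap_eq_one_of_alternating hB _ _)
    conv_lhs => rw [hp, hq]; simp only [map_mul, MonoidHom.mul_apply, hskew]
    rw [div_eq_mul_inv]
    ac_rfl
  simp only [MonoidHom.mul_apply, MonoidHom.compl₂_apply, MonoidHom.comp_apply]
  rw [mul_div_mul_comm, mul_div_mul_comm, hZ₁, hZ₂, hB_split]
  rfl

theorem pi {ι : Type*} [Finite ι] {H : ι → Type*} [∀ i, CommGroup (H i)]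
    (h : ∀ i, AltFormsSplit M (H i)) : AltFormsSplit M (∀ i, H i) := by
  induction ι using Finite.induction_empty_option with
  | of_equiv e ih =>
    exact of_mulEquiv { (Equiv.piCongrLeft H e).symm with map_mul' := fun _ _ => rfl }
      (ih fun i => h (e i))
  | h_empty => exact of_isCyclic
  | h_option ih =>
    exact of_mulEquiv { Equiv.piOptionEquivProd with map_mul' := fun _ _ => rfl }
      ((h none).prod (ih fun i => h (some i)))

theorem of_finite [Finite G] : AltFormsSplit M G := by
  obtain ⟨ι, _, n, -, ⟨e⟩⟩ := CommGroup.equiv_prod_multiplicative_zmod_of_finite G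
  exact of_mulEquiv e (pi fun _ => of_isCyclic)

end AltFormsSplit

end AltForms

theorem MonoidHom.exists_leftInverse_of_pow_surjective {D E : Type*} [CommGroup D] [CommGroup E]
    (hD : ∀ n : ℕ, n ≠ 0 → Surjective fun d : D => d ^ n) (i : D →* E) (hi : Injective i) :
    ∃ r : E →* D, ∀ d, r (i d) = d := by
  let : RootableBy D ℕ := rootableByOfPowLeftSurj D ℕ (hD _)
  let : RootableBy D ℤ := Group.rootableByIntOfRootableByNat D
  let : DivisibleBy (Additive D) ℤ := divisibleByOfSMulRightSurj _ _ fun hn x =>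
    ⟨.ofMul (RootableBy.root x.toMul _), congrArg Additive.ofMul (RootableBy.root_cancel _ hn)⟩
  obtain ⟨r, hr⟩ := (Module.Baer.of_divisible (Additive D)).extension_property_addMonoidHom
    i.toAdditive hi (AddMonoidHom.id _)
  exact ⟨r.toMultiplicative, fun d => congrArg Additive.toMul (DFunLike.congr_fun hr (.ofMul d))⟩

theorem Units.pow_surjective_of_isAlgClosed {k : Type*} [Field k] [IsAlgClosed k] {n : ℕ}
    (hn : n ≠ 0) : Surjective fun u : kˣ => u ^ n := by
  intro x
  obtain ⟨y, hy⟩ := IsAlgClosed.exists_pow_nat_eq (x : k) (Nat.pos_of_ne_zero hn)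
  have hy₀ : y ≠ 0 := ne_zero_pow hn (hy ▸ x.ne_zero)
  exact ⟨Units.mk0 y hy₀, Units.ext (by simpa using hy)⟩

section Extension

variable {G k : Type*} [CommGroup G] [Field k]

@[ext]
structure CocycleExt (z : G → G → kˣ) where
  scalar : kˣ
  base : G

namespace CocycleExt

variable {z : G → G → kˣ}

instance : Mul (CocycleExt z) :=
  ⟨fun x y => ⟨x.scalar * y.scalar * z x.base y.base, x.base * y.base⟩⟩

-- `z` need not be normalized; `IsCocycle2.apply_one_left` makes `((z 1 1)⁻¹, 1)` the identity.
instance : One (CocycleExt z) := ⟨⟨(z 1 1)⁻¹, 1⟩⟩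

instance : Inv (CocycleExt z) :=
  ⟨fun x => ⟨(z 1 1 * x.scalar * z x.base⁻¹ x.base)⁻¹, x.base⁻¹⟩⟩

@[simp] theorem scalar_mul (x y : CocycleExt z) :
    (x * y).scalar = x.scalar * y.scalar * z x.base y.base := rfl

@[simp] theorem base_mul (x y : CocycleExt z) : (x * y).base = x.base * y.base := rfl

@[simp] theorem scalar_one : (1 : CocycleExt z).scalar = (z 1 1)⁻¹ := rfl

@[simp] theorem base_one : (1 : CocycleExt z).base = 1 := rfl

@[simp] theorem scalar_inv (x : CocycleExt z) :
    x⁻¹.scalar = (z 1 1 * x.scalar * z x.base⁻¹ x.base)⁻¹ := rfl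

@[simp] theorem base_inv (x : CocycleExt z) : x⁻¹.base = x.base⁻¹ := rfl

theorem scalar_mul_assoc (hz : IsCocycle2 z) (x y w : CocycleExt z) :
    (x * y * w).scalar = (x * (y * w)).scalar :=
  calc _ = x.scalar * y.scalar * w.scalar * (z (x.base * y.base) w.base * z x.base y.base) := by
          simp only [scalar_mul, base_mul]; ac_rfl
    _ = _ := by rw [← hz]; simp only [scalar_mul, base_mul]; ac_rfl

abbrev commGroup (hz : IsCocycle2 z) (hsym : ∀ a b, z a b = z b a) : CommGroup (CocycleExt z) :=
  { Group.ofLeftAxioms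
      (fun x y w => CocycleExt.ext (scalar_mul_assoc hz x y w) (mul_assoc _ _ _))
      (fun x => CocycleExt.ext (by simp [hz.apply_one_left]) (one_mul _))
      (fun x => CocycleExt.ext (by simp [mul_assoc]) (inv_mul_cancel _)) with
    mul_comm := fun x y =>
      CocycleExt.ext (by simp [hsym x.base, mul_comm x.scalar]) (mul_comm _ _) }

end CocycleExt

theorem IsCocycle2.isCoboundary2_of_symm [IsAlgClosed k] {z : G → G → kˣ} (hz : IsCocycle2 z)
    (hsym : ∀ a b, z a b = z b a) : IsCoboundary2 z := by
  let := CocycleExt.commGroup hz hsym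
  let i : kˣ →* CocycleExt z := MonoidHom.mk' (fun c => ⟨c * (z 1 1)⁻¹, 1⟩) fun c d =>
    CocycleExt.ext (by simp [mul_assoc, mul_left_comm]) (mul_one 1).symm
  have hi : Injective i := fun c d h => by simpa [i] using congrArg CocycleExt.scalar h
  obtain ⟨r, hr⟩ := MonoidHom.exists_leftInverse_of_pow_surjective
    (fun _ => Units.pow_surjective_of_isAlgClosed) i hi
  refine ⟨fun a => r ⟨1, a⟩, fun a b => eq_mul_inv_of_mul_eq ?_⟩
  have hsplit : (⟨1, a⟩ * ⟨1, b⟩ : CocycleExt z) = i (z a b) * ⟨1, a * b⟩ :=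
    CocycleExt.ext (by simp [i, hz.apply_one_left]) (one_mul _).symm
  simpa [hr] using (congrArg r hsplit).symm

end Extension

theorem IsAltForm.exists_isCocycle2_antisym_eq {G k : Type*} [CommGroup G] [Finite G] [Field k]
    {β : G → G → kˣ} (hβ : IsAltForm β) : ∃ z, IsCocycle2 z ∧ antisym z = β := by
  let B : G →* G →* kˣ :=
    MonoidHom.mk' (fun a => MonoidHom.mk' (β a) (hβ.2.1 a)) fun a b => MonoidHom.ext (hβ.1 a b)
  obtain ⟨Z, hZ⟩ := AltFormsSplit.of_finite B hβ.2.2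
  exact ⟨fun a b => Z a b, isCocycle2_monoidHom₂ Z,
    funext₂ fun a b => (div_eq_mul_inv _ _).symm.trans (hZ a b)⟩


theorem stmt3_general {G : Type*} [CommGroup G] [Fintype G]
    (k : Type*) [Field k] [IsAlgClosed k] :
    (∀ z w : G → G → kˣ,
        antisym (fun a b => z a b * w a b) = fun a b => antisym z a b * antisym w a b) ∧
    (∀ z : G → G → kˣ, IsCocycle2 z →
        ((antisym z = fun _ _ => 1) ↔ IsCoboundary2 z)) ∧
    (∀ β : G → G → kˣ,
        IsAltForm β ↔ ∃ z : G → G → kˣ, IsCocycle2 z ∧ antisym z = β) := by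
  refine ⟨antisym_mul, fun z hz => ⟨fun h => ?_, IsCoboundary2.antisym_eq_one⟩,
    fun β => ⟨IsAltForm.exists_isCocycle2_antisym_eq, ?_⟩⟩
  · exact hz.isCoboundary2_of_symm (antisym_eq_one_iff.mp h)
  · rintro ⟨z, hz, rfl⟩
    exact hz.isAltForm_antisym

/-- for a finite abelian group `G` and `k` algebraically closed of
characteristic 0, antisymmetrization `Z²(G,kˣ) → Alt(G)` is a homomorphism with
kernel exactly `B²(G,kˣ)` and image exactly `Alt(G)`. -/
theorem stmt3 {G : Type*} [CommGroup G] [Fintype G]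
    (k : Type*) [Field k] [IsAlgClosed k] [CharZero k] :
    (∀ z w : G → G → kˣ,
        antisym (fun a b => z a b * w a b) = fun a b => antisym z a b * antisym w a b) ∧
    (∀ z : G → G → kˣ, IsCocycle2 z →
        ((antisym z = fun _ _ => 1) ↔ IsCoboundary2 z)) ∧
    (∀ β : G → G → kˣ,
        IsAltForm β ↔ ∃ z : G → G → kˣ, IsCocycle2 z ∧ antisym z = β) :=
  stmt3_general k
end

section
/- Let $p$ be a prime, $G$ a finite abelian $p$-group written multiplicatively with a $C_p$-action $\bullet$ by automorphisms, and let $\mathbb{G} = G \rtimes C_p$ be the corresponding semidirect product with $C_p = \langle t \rangle$. Then the lower central series of $\mathbb{G}$ satisfies $\gamma_r(\mathbb{G}) = (t-1)^{r-1} \bullet G$ for all $r \ge 2$, where $(t-1)^{r-1}\bullet G$ denotes the image of $G$ under the operator $(t-1)^{r-1} \in \mathbb{Z}C_p$. -/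
/-!
Write `δ_h g = (h • g) / g`, so that `d = δ_t`. For abelian `G` and `H` the commutator in
`G ⋊ H` is `⁅x, y⁆ = δ_{x.right} y.left / δ_{y.right} x.left`, and `⁅g, y⁆ = (δ_{y.right} g)⁻¹`
for `g ∈ G`. The `δ_h` commute with each other and with the action, and
`δ_{hk} g = h • δ_k g * δ_h g`; as `t` generates `H`, every `δ_h` therefore maps `G` into `δ_t G`,
hence `δ_t^n G` into `δ_t^{n+1} G`. This gives `⁅δ_t^n G, G ⋊ H⁆ = δ_t^{n+1} G` (the commutators
`⁅g, t⁆` give `⊇`) and `⁅G ⋊ H, G ⋊ H⁆ = δ_t G`, and the lower central series follows by induction.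
-/
open SemidirectProduct
open scoped commutatorElement

section
variable {G H : Type*} [CommGroup G] [Group H] (φ : H →* MulAut G)

def diffHom (h : H) : G →* G := (φ h).toMonoidHom / MonoidHom.id G

@[simp]
theorem diffHom_apply (h : H) (g : G) : diffHom φ h g = φ h g / g := rfl

theorem diffHom_mul (h k : H) (g : G) :
    diffHom φ (h * k) g = φ h (diffHom φ k g) * diffHom φ h g := by
  simp [map_div, MulAut.mul_apply]

theorem diffHom_inv (h : H) (g : G) : diffHom φ h⁻¹ g = φ h⁻¹ (diffHom φ h g)⁻¹ := by
  simp [map_div]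

def diffPow (h : H) (n : ℕ) : G →* G where
  toFun := (diffHom φ h)^[n]
  map_one' := iterate_map_one _ n
  map_mul' := iterate_map_mul _ n

theorem coe_diffPow (h : H) (n : ℕ) : ⇑(diffPow φ h n) = (diffHom φ h)^[n] := rfl

def diffPowRange (h : H) (n : ℕ) : Subgroup (G ⋊[φ] H) := (diffPow φ h n).range.map inl

theorem mem_diffPowRange {h : H} {n : ℕ} {x : G ⋊[φ] H} :
    x ∈ diffPowRange φ h n ↔ ∃ g, x = inl ((diffHom φ h)^[n] g) := by
  simp [diffPowRange, coe_diffPow, eq_comm]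

theorem inl_mem_diffPowRange {h : H} {n : ℕ} {g : G} :
    inl g ∈ diffPowRange φ h n ↔ g ∈ (diffPow φ h n).range :=
  Subgroup.mem_map_iff_mem inl_injective

end

section
variable {G H : Type*} [CommGroup G] [CommGroup H] (φ : H →* MulAut G)

theorem diffHom_map_apply (h k : H) (g : G) : diffHom φ h (φ k g) = φ k (diffHom φ h g) := by
  simp only [diffHom_apply, map_div, ← MulAut.mul_apply, ← map_mul, mul_comm]

theorem commute_diffHom (h k : H) : Function.Commute (diffHom φ h) (diffHom φ k) := fun g => by
  rw [diffHom_apply φ k g, map_div, diffHom_map_apply, ← diffHom_apply]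

theorem map_mem_range_diffHom {t : H} (k : H) {x : G} (hx : x ∈ (diffHom φ t).range) :
    φ k x ∈ (diffHom φ t).range := by
  obtain ⟨e, rfl⟩ := hx
  exact ⟨φ k e, diffHom_map_apply φ t k e⟩

theorem range_diffHom_le_of_zpowers_eq_top {t : H} (ht : Subgroup.zpowers t = ⊤) (h : H) :
    (diffHom φ h).range ≤ (diffHom φ t).range := by
  let K : Subgroup H :=
    { carrier := {h | ∀ g, diffHom φ h g ∈ (diffHom φ t).range}
      mul_mem' := fun {h k} hh hk g => by
        rw [diffHom_mul]
        exact mul_mem (map_mem_range_diffHom φ h (hk g)) (hh g)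
      one_mem' := fun g => by simp
      inv_mem' := fun {h} hh g => by
        rw [diffHom_inv]
        exact map_mem_range_diffHom φ _ (inv_mem (hh g)) }
  have hK : h ∈ K := Subgroup.zpowers_le.mpr (fun g => ⟨g, rfl⟩) (ht ▸ Subgroup.mem_top h)
  rintro _ ⟨g, rfl⟩
  exact hK g

theorem diffHom_mem_range_diffPow {t : H} (ht : Subgroup.zpowers t = ⊤) (h : H) {n : ℕ} {a : G}
    (ha : a ∈ (diffPow φ t n).range) : diffHom φ h a ∈ (diffPow φ t (n + 1)).range := by
  obtain ⟨c, rfl⟩ := ha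
  obtain ⟨e, he⟩ := range_diffHom_le_of_zpowers_eq_top φ ht h ⟨c, rfl⟩
  refine ⟨e, ?_⟩
  rw [coe_diffPow, coe_diffPow, Function.iterate_succ_apply, he,
    (commute_diffHom φ h t).iterate_right n c]

theorem commutatorElement_eq_inl (x y : G ⋊[φ] H) :
    ⁅x, y⁆ = inl (diffHom φ x.right y.left / diffHom φ y.right x.left) := by
  ext
  · simp only [commutatorElement_def, mul_left, inv_left, left_inl, mul_right, inv_right,
      ← MulAut.mul_apply, ← map_mul]
    simp only [mul_inv_cancel_comm, map_inv, mul_comm y.right, inv_mul_cancel, map_one,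
      MulAut.one_apply, diffHom_apply, div_eq_mul_inv, mul_inv, inv_inv]
    simp only [mul_comm, mul_left_comm, mul_assoc]
  · simp only [right_inl, commutatorElement_def, mul_right, inv_right, mul_comm x.right,
      mul_inv_cancel_right, mul_inv_cancel]

theorem commutatorElement_inl (g : G) (y : G ⋊[φ] H) :
    ⁅(inl g : G ⋊[φ] H), y⁆ = inl ((diffHom φ y.right g)⁻¹) := by
  simp [commutatorElement_eq_inl]

variable {φ} {t : H}

theorem commutator_diffPowRange_top (ht : Subgroup.zpowers t = ⊤) (n : ℕ) :
    ⁅diffPowRange φ t n, ⊤⁆ = diffPowRange φ t (n + 1) := by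
  apply le_antisymm
  · rw [Subgroup.commutator_le]
    rintro _ ⟨a, ha, rfl⟩ y -
    rw [commutatorElement_inl, inl_mem_diffPowRange]
    exact inv_mem (diffHom_mem_range_diffPow φ ht y.right ha)
  · rintro _ ⟨_, ⟨g, rfl⟩, rfl⟩
    have hg : (inl (diffPow φ t (n + 1) g) : G ⋊[φ] H) =
        ⁅(inl ((diffPow φ t n g)⁻¹) : G ⋊[φ] H), inr t⁆ := by
      rw [commutatorElement_inl, right_inr, map_inv (diffHom φ t), inv_inv, coe_diffPow,
        coe_diffPow, Function.iterate_succ_apply']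
    rw [hg]
    exact Subgroup.commutator_mem_commutator ((inl_mem_diffPowRange φ).mpr (inv_mem ⟨g, rfl⟩))
      (Subgroup.mem_top _)

theorem commutator_eq_diffPowRange_one (ht : Subgroup.zpowers t = ⊤) :
    commutator (G ⋊[φ] H) = diffPowRange φ t 1 := by
  apply le_antisymm
  · rw [commutator_def, Subgroup.commutator_le]
    rintro x - y -
    rw [commutatorElement_eq_inl, inl_mem_diffPowRange]
    exact div_mem (diffHom_mem_range_diffPow φ ht _ ⟨y.left, rfl⟩)
      (diffHom_mem_range_diffPow φ ht _ ⟨x.left, rfl⟩)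
  · rw [← commutator_diffPowRange_top ht 0, commutator_def]
    exact Subgroup.commutator_mono le_top le_rfl

theorem lowerCentralSeries_succ_eq_diffPowRange (ht : Subgroup.zpowers t = ⊤) (n : ℕ) :
    (⊤ : Subgroup (G ⋊[φ] H)).lowerCentralSeries (n + 1) = diffPowRange φ t (n + 1) := by
  induction n with
  | zero => exact commutator_eq_diffPowRange_one ht
  | succ n ih => rw [Subgroup.lowerCentralSeries_succ, ih, commutator_diffPowRange_top ht]

end

theorem ZMod.zpowers_ofAdd_one_eq_top (n : ℕ) :
    Subgroup.zpowers (Multiplicative.ofAdd (1 : ZMod n)) = ⊤ := by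
  refine eq_top_iff.mpr fun h _ => ?_
  obtain ⟨k, hk⟩ := ZMod.intCast_surjective (Multiplicative.toAdd h)
  exact ⟨k, by simp [← ofAdd_zsmul, hk]⟩

theorem stmt8_general (p : ℕ) {G : Type*} [CommGroup G]
    (φ : Multiplicative (ZMod p) →* MulAut G)
    (d : G → G)
    (hd : ∀ g, d g = φ (Multiplicative.ofAdd 1) g * g⁻¹)
    (r : ℕ) (hr : 2 ≤ r) :
    ∀ x : G ⋊[φ] Multiplicative (ZMod p),
      x ∈ Subgroup.lowerCentralSeries (⊤ : Subgroup (G ⋊[φ] Multiplicative (ZMod p))) (r - 1) ↔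
        ∃ g : G, x = SemidirectProduct.inl (d^[r - 1] g) := by
  intro x
  obtain rfl : d = diffHom φ (Multiplicative.ofAdd 1) :=
    funext fun g => by rw [hd, diffHom_apply, div_eq_mul_inv]
  obtain ⟨n, hn⟩ : ∃ n, r - 1 = n + 1 := ⟨r - 2, by omega⟩
  rw [hn, lowerCentralSeries_succ_eq_diffPowRange (ZMod.zpowers_ofAdd_one_eq_top p),
    mem_diffPowRange]

/-- for a finite abelian `p`-group `G` with a `C_p`-action `φ` and
`𝔾 = G ⋊ C_p`, the lower central series satisfies `γ_r(𝔾) = (t-1)^{r-1} • G` for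
`r ≥ 2`, where `(t-1) • g = (φ t g) * g⁻¹` and `(t-1)^{r-1} • G` is the image of the
`(r-1)`-fold iterate of this operator (note `γ_r` = `lowerCentralSeries _ (r-1)` in
Mathlib's indexing). -/
theorem stmt8 (p : ℕ) [Fact p.Prime] {G : Type*} [CommGroup G] [Fintype G]
    (hG : IsPGroup p G)
    (φ : Multiplicative (ZMod p) →* MulAut G)
    (d : G → G)
    (hd : ∀ g, d g = φ (Multiplicative.ofAdd 1) g * g⁻¹)
    (r : ℕ) (hr : 2 ≤ r) :
    ∀ x : G ⋊[φ] Multiplicative (ZMod p),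
      x ∈ Subgroup.lowerCentralSeries (⊤ : Subgroup (G ⋊[φ] Multiplicative (ZMod p))) (r - 1) ↔
        ∃ g : G, x = SemidirectProduct.inl (d^[r - 1] g) :=
  stmt8_general p φ d hd r hr
end

section
/- Let $G$ and $G'$ be finite $\mathbb{F}_p[C_p]$-modules with Krull–Schmidt decompositions $G \cong \bigoplus_l R_l^{m_l}$ and $G' \cong \bigoplus_l R_l^{m'_l}$ where $R_l = \mathbb{F}_p[C_p]/\langle(t-1)^l\rangle$. If the semidirect products $G \rtimes C_p$ and $G' \rtimes C_p$ are isomorphic as groups, then $m_l = m'_l$ for all $l$, and hence $G \cong G'$ as $C_p$-modules. -/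
/-!
Write `δ = σ - 1` for the action `σ` of the generator `t` on `G`. In `G ⋊ C_p` the commutator
`⁅g, t⁆` is `(δ g)⁻¹`, and commutators of elements of `δᵏ G` with anything lie in `δᵏ⁺¹ G`, so
the lower central series is `γ_{k+1} = δ^{k+1} G`. In the Jordan model `δ` is the nilpotent shift,
`δᵏ G` consists of the vectors whose top `k` coordinates vanish in every block, and
`|δᵏ G| = p ^ ∑ₗ m_l (l + 1 - k)`. These orders are isomorphism invariants of the semidirect
product (for `k = 0` via `|G ⋊ C_p| = p |G|`), and the multiplicities are their second
differences. Once `m = m'` both actions are given by the same matrix, so `e'⁻¹ ∘ e` is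
equivariant.
-/

open Multiplicative SemidirectProduct
open scoped commutatorElement

namespace MulAut

variable {G : Type*} [CommGroup G] (σ : MulAut G)

def divId : G →* G := σ.toMonoidHom / MonoidHom.id G

@[simp] theorem divId_apply (g : G) : σ.divId g = σ g / g := rfl

/-- In additive notation, `σ.divIdFiltration k = (σ - 1)ᵏ G`. -/
def divIdFiltration : ℕ → Subgroup G
  | 0 => ⊤
  | k + 1 => (divIdFiltration k).map σ.divId

@[simp] theorem divIdFiltration_zero : σ.divIdFiltration 0 = ⊤ := rfl

theorem divIdFiltration_succ (k : ℕ) :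
    σ.divIdFiltration (k + 1) = (σ.divIdFiltration k).map σ.divId := rfl

variable {σ}

theorem divIdFiltration_succ_le : ∀ k, σ.divIdFiltration (k + 1) ≤ σ.divIdFiltration k
  | 0 => le_top
  | k + 1 => Subgroup.map_mono (divIdFiltration_succ_le k)

theorem div_mem_divIdFiltration_succ {k : ℕ} {g : G} (hg : g ∈ σ.divIdFiltration k) :
    σ g / g ∈ σ.divIdFiltration (k + 1) :=
  Subgroup.mem_map_of_mem _ hg

theorem apply_mem_divIdFiltration {k : ℕ} {g : G} (hg : g ∈ σ.divIdFiltration k) :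
    σ g ∈ σ.divIdFiltration k := by
  rw [← div_mul_cancel (σ g) g]
  exact mul_mem (divIdFiltration_succ_le k (div_mem_divIdFiltration_succ hg)) hg

theorem pow_apply_div_mem_divIdFiltration_succ {k : ℕ} (n : ℕ) {g : G}
    (hg : g ∈ σ.divIdFiltration k) :
    (σ ^ n) g / g ∈ σ.divIdFiltration (k + 1) := by
  induction n generalizing g with
  | zero => simp
  | succ n ih =>
    rw [pow_succ, MulAut.mul_apply, ← div_mul_div_cancel _ (σ g)]
    exact mul_mem (ih (apply_mem_divIdFiltration hg)) (div_mem_divIdFiltration_succ hg)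

end MulAut

theorem Subgroup.card_lowerCentralSeries_congr {G K : Type*} [Group G] [Group K] (f : G ≃* K)
    (n : ℕ) : Nat.card ((⊤ : Subgroup G).lowerCentralSeries n)
      = Nat.card ((⊤ : Subgroup K).lowerCentralSeries n) := by
  rw [← Subgroup.card_map_of_injective (f := f.toMonoidHom) f.injective,
    Subgroup.map_lowerCentralSeries, Subgroup.map_top_of_surjective _ f.surjective]

namespace SemidirectProduct

theorem commutatorElement_eq_inl {N H : Type*} [Group N] [CommGroup H] {φ : H →* MulAut N}
    (a b : N ⋊[φ] H) :
    ⁅a, b⁆ = inl (a.left * φ a.right b.left * φ b.right a.left⁻¹ * b.left⁻¹) := by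
  ext
  · simp only [commutatorElement_def, mul_left, mul_right, map_mul, inv_left, map_inv,
      MulAut.inv_apply, MulAut.mul_apply, inv_right, mul_inv_cancel_comm,
      MulEquiv.apply_symm_apply, left_inl, right_inl, map_one, MulAut.one_apply, mul_one, inv_one,
      mul_left_inj, mul_right_inj, inv_inj]
    change (φ a.right * φ b.right * (φ a.right)⁻¹) a.left = _
    rw [← map_inv, ← map_mul, ← map_mul, mul_comm a.right, mul_inv_cancel_right]
  · simp [commutatorElement_def, mul_comm a.right b.right]

section LowerCentralSeries

variable {N H : Type*} [CommGroup N] [CommGroup H] {φ : H →* MulAut N} {h : H}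

theorem commutatorElement_eq_inl_div (a b : N ⋊[φ] H) :
    ⁅a, b⁆ = inl (φ a.right b.left / b.left / (φ b.right a.left / a.left)) := by
  rw [commutatorElement_eq_inl, map_inv]
  congr 1
  simp only [div_eq_mul_inv, mul_inv_rev, inv_inv]
  ac_rfl

theorem commutatorElement_inl_inr (g : N) :
    ⁅(inl g : N ⋊[φ] H), (inr h : N ⋊[φ] H)⁆ = inl (φ h g / g)⁻¹ := by
  simp [commutatorElement_eq_inl_div]

theorem map_inl_divIdFiltration_succ_le_commutator {k : ℕ} {K : Subgroup (N ⋊[φ] H)}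
    (hK : ((φ h).divIdFiltration k).map (inl (φ := φ)) ≤ K) :
    ((φ h).divIdFiltration (k + 1)).map (inl (φ := φ)) ≤ ⁅K, ⊤⁆ := by
  rintro _ ⟨_, ⟨g, hg, rfl⟩, rfl⟩
  rw [MulAut.divId_apply, ← inv_inv (inl _), ← map_inv, ← commutatorElement_inl_inr]
  exact inv_mem (Subgroup.commutator_mem_commutator (hK ⟨g, hg, rfl⟩) (Subgroup.mem_top _))

variable (hh : ∀ x : H, x ∈ Submonoid.powers h)
include hh

theorem apply_div_mem_divIdFiltration_succ {k : ℕ} (x : H) {g : N}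
    (hg : g ∈ (φ h).divIdFiltration k) : φ x g / g ∈ (φ h).divIdFiltration (k + 1) := by
  obtain ⟨n, rfl⟩ := hh x
  rw [map_pow]
  exact MulAut.pow_apply_div_mem_divIdFiltration_succ n hg

theorem commutator_top_le_map_inl_divIdFiltration_one :
    ⁅(⊤ : Subgroup (N ⋊[φ] H)), ⊤⁆
      ≤ ((φ h).divIdFiltration 1).map (inl (φ := φ)) := by
  rw [Subgroup.commutator_le]
  intro a _ b _
  rw [commutatorElement_eq_inl_div]
  refine Subgroup.mem_map_of_mem _ (div_mem ?_ ?_) <;>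
    exact apply_div_mem_divIdFiltration_succ hh _ (Subgroup.mem_top _)

theorem commutator_map_inl_divIdFiltration_le (k : ℕ) :
    ⁅((φ h).divIdFiltration k).map (inl (φ := φ)), ⊤⁆
      ≤ ((φ h).divIdFiltration (k + 1)).map (inl (φ := φ)) := by
  rw [Subgroup.commutator_le]
  rintro _ ⟨g, hg, rfl⟩ b _
  rw [commutatorElement_eq_inl_div]
  refine Subgroup.mem_map_of_mem _ ?_
  simpa using inv_mem (apply_div_mem_divIdFiltration_succ hh b.right hg)

theorem lowerCentralSeries_succ_eq_map_inl (k : ℕ) :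
    (⊤ : Subgroup (N ⋊[φ] H)).lowerCentralSeries (k + 1)
      = ((φ h).divIdFiltration (k + 1)).map (inl (φ := φ)) := by
  induction k with
  | zero =>
    exact le_antisymm (commutator_top_le_map_inl_divIdFiltration_one hh)
      (map_inl_divIdFiltration_succ_le_commutator le_top)
  | succ k ih =>
    rw [Subgroup.lowerCentralSeries_succ, ih]
    exact le_antisymm (commutator_map_inl_divIdFiltration_le hh _)
      (map_inl_divIdFiltration_succ_le_commutator le_rfl)

end LowerCentralSeries

theorem card_divIdFiltration_congr {N N' H : Type*} [CommGroup N] [CommGroup N'] [CommGroup H]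
    [Finite H] {φ : H →* MulAut N} {φ' : H →* MulAut N'} {h h' : H}
    (hh : ∀ x : H, x ∈ Submonoid.powers h) (hh' : ∀ x : H, x ∈ Submonoid.powers h')
    (f : N ⋊[φ] H ≃* N' ⋊[φ'] H) :
    ∀ k, Nat.card ((φ h).divIdFiltration k) = Nat.card ((φ' h').divIdFiltration k)
  | 0 => by
    have hcard := Nat.card_congr f.toEquiv
    rw [SemidirectProduct.card, SemidirectProduct.card] at hcard
    simpa using Nat.eq_of_mul_eq_mul_right Nat.card_pos hcard
  | k + 1 => by
    have hlcs := Subgroup.card_lowerCentralSeries_congr f (k + 1)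
    rwa [lowerCentralSeries_succ_eq_map_inl hh, lowerCentralSeries_succ_eq_map_inl hh',
      Subgroup.card_map_of_injective inl_injective,
      Subgroup.card_map_of_injective inl_injective] at hlcs

end SemidirectProduct

namespace JordanBlocks

abbrev Vec (n : ℕ) (m : Fin n → ℕ) (R : Type*) :=
  ∀ l : Fin n, Fin (m l) → Fin ((l : ℕ) + 1) → R

variable {n : ℕ} {m : Fin n → ℕ} {R : Type*} [AddCommGroup R]

def shift : Vec n m R →+ Vec n m R where
  toFun v l i j := if h : (j : ℕ) + 1 < (l : ℕ) + 1 then v l i ⟨(j : ℕ) + 1, h⟩ else 0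
  map_zero' := by funext l i j; simp
  map_add' v w := by
    funext l i j
    simp only [Pi.add_apply]
    split_ifs <;> simp

theorem shift_apply (v : Vec n m R) (l : Fin n) (i : Fin (m l)) (j : Fin ((l : ℕ) + 1)) :
    shift v l i j = if h : (j : ℕ) + 1 < (l : ℕ) + 1 then v l i ⟨(j : ℕ) + 1, h⟩ else 0 :=
  rfl

/-- The condition `l < j + k` says that `j` is one of the top `k` coordinates of a block of size
`l + 1`. -/
def topVanishing (k : ℕ) : AddSubgroup (Vec n m R) where
  carrier := {v | ∀ (l : Fin n) i (j : Fin ((l : ℕ) + 1)), (l : ℕ) < j + k → v l i j = 0}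
  add_mem' ha hb l i j h := by simp [ha l i j h, hb l i j h]
  zero_mem' _ _ _ _ := rfl
  neg_mem' ha l i j h := by simp [ha l i j h]

@[simp] theorem topVanishing_zero : topVanishing 0 = (⊤ : AddSubgroup (Vec n m R)) :=
  eq_top_iff.mpr fun _ _ l _ j h => absurd j.isLt (by omega)

theorem shift_mem_topVanishing_succ {k : ℕ} {v : Vec n m R} (hv : v ∈ topVanishing k) :
    shift v ∈ topVanishing (k + 1) := by
  intro l i j hj
  rw [shift_apply]
  split_ifs with h
  · exact hv l i _ (by dsimp only; omega)
  · rfl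

theorem exists_shift_eq {k : ℕ} {w : Vec n m R} (hw : w ∈ topVanishing (k + 1)) :
    ∃ v ∈ topVanishing k, shift v = w := by
  refine ⟨fun l i j => if h : 0 < (j : ℕ) then w l i ⟨(j : ℕ) - 1, by omega⟩ else 0,
    ?_, ?_⟩
  · intro l i j hj
    dsimp only
    split_ifs
    · exact hw l i _ (by dsimp only; omega)
    · rfl
  · funext l i j
    rw [shift_apply]
    split_ifs with h h'
    · rfl
    · simp at h'
    · exact (hw l i j (by omega)).symm

theorem topVanishing_succ (k : ℕ) :
    topVanishing (k + 1) = (topVanishing k).map (shift : Vec n m R →+ Vec n m R) :=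
  le_antisymm (fun _ hw => AddSubgroup.mem_map.mpr (exists_shift_eq hw))
    (AddSubgroup.map_le_iff_le_comap.mpr fun _ => shift_mem_topVanishing_succ)

theorem card_topVanishing (k : ℕ) :
    Nat.card (topVanishing k : AddSubgroup (Vec n m R))
      = Nat.card R ^ ∑ l : Fin n, m l * ((l : ℕ) + 1 - k) := by
  have restrict : topVanishing k ≃ ∀ l : Fin n, Fin (m l) → Fin ((l : ℕ) + 1 - k) → R :=
    { toFun v l i j := v.1 l i (Fin.castLE (Nat.sub_le _ _) j)
      invFun w := ⟨fun l i j => if h : (j : ℕ) < (l : ℕ) + 1 - k then w l i ⟨j, h⟩ else 0,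
        fun l i j hj => dif_neg (by omega)⟩
      left_inv v := by
        ext l i j
        dsimp only
        split_ifs with h
        · rfl
        · exact (v.2 l i j (by omega)).symm
      right_inv w := by
        funext l i j
        simp }
  simp [Nat.card_congr restrict, Nat.card_pi, ← pow_mul, mul_comm, Finset.prod_pow_eq_pow_sum]

section Transport

variable {G : Type*} [CommGroup G]

theorem toAdd_div_eq_shift {T : Vec n m R → Vec n m R}
    (hT : ∀ v l i j, T v l i j
      = v l i j + if h : (j : ℕ) + 1 < (l : ℕ) + 1 then v l i ⟨(j : ℕ) + 1, h⟩ else 0)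
    {σ : MulAut G} {e : G ≃* Multiplicative (Vec n m R)}
    (he : ∀ g, e (σ g) = ofAdd (T (toAdd (e g)))) (g : G) :
    toAdd (e (σ g / g)) = shift (toAdd (e g)) := by
  funext l i j
  simp [he, hT, shift_apply]

variable {σ : MulAut G} (e : G ≃* Multiplicative (Vec n m R))
  (he : ∀ g, toAdd (e (σ g / g)) = shift (toAdd (e g)))
include he

theorem mem_divIdFiltration_iff (k : ℕ) (g : G) :
    g ∈ σ.divIdFiltration k ↔ toAdd (e g) ∈ topVanishing k := by
  induction k generalizing g with
  | zero => simp
  | succ k ih =>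
    rw [MulAut.divIdFiltration_succ, topVanishing_succ, Subgroup.mem_map, AddSubgroup.mem_map]
    constructor
    · rintro ⟨g', hg', rfl⟩
      exact ⟨toAdd (e g'), (ih g').1 hg', (he g').symm⟩
    · rintro ⟨v, hv, hvg⟩
      refine ⟨e.symm (ofAdd v), (ih _).2 (by simpa using hv), e.injective (toAdd.injective ?_)⟩
      rw [MulAut.divId_apply, he, MulEquiv.apply_symm_apply, toAdd_ofAdd, hvg]

theorem card_divIdFiltration (k : ℕ) :
    Nat.card (σ.divIdFiltration k) = Nat.card R ^ ∑ l : Fin n, m l * ((l : ℕ) + 1 - k) := by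
  rw [← card_topVanishing]
  exact Nat.card_congr ((e.toEquiv.trans toAdd).subtypeEquiv (mem_divIdFiltration_iff e he k))

end Transport

end JordanBlocks

theorem eq_of_sum_mul_tsub_eq {n : ℕ} {m m' : Fin n → ℕ}
    (h : ∀ k, ∑ l : Fin n, m l * ((l : ℕ) + 1 - k)
      = ∑ l : Fin n, m' l * ((l : ℕ) + 1 - k)) :
    m = m' := by
  have second_difference (m : Fin n → ℕ) (k : Fin n) :
      (m k : ℤ) = ((∑ l : Fin n, m l * ((l : ℕ) + 1 - k) : ℕ) : ℤ)
        - 2 * ((∑ l : Fin n, m l * ((l : ℕ) + 1 - (k + 1)) : ℕ) : ℤ)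
        + ((∑ l : Fin n, m l * ((l : ℕ) + 1 - (k + 2)) : ℕ) : ℤ) := by
    have hdelta (l : Fin n) : ((if l = k then 1 else 0 : ℕ) : ℤ)
        = ((l + 1 - k : ℕ) : ℤ) - 2 * ((l + 1 - (k + 1) : ℕ) : ℤ)
          + ((l + 1 - (k + 2) : ℕ) : ℤ) := by
      by_cases hlk : l = k
      · rw [if_pos hlk, hlk]
        omega
      · rw [if_neg hlk]
        have := Fin.val_ne_of_ne hlk
        omega
    calc (m k : ℤ)
        = ∑ l : Fin n, (m l : ℤ) * ((if l = k then 1 else 0 : ℕ) : ℤ) := by simp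
      _ = _ := by
        simp only [hdelta]
        push_cast
        simp only [mul_add, mul_sub, Finset.sum_add_distrib, Finset.sum_sub_distrib,
          Finset.mul_sum]
        ring_nf
  funext k
  have hk := second_difference m k
  rw [h, h, h, ← second_difference m'] at hk
  exact_mod_cast hk

theorem ZMod.mem_powers_ofAdd_one {p : ℕ} [NeZero p] (x : Multiplicative (ZMod p)) :
    x ∈ Submonoid.powers (ofAdd 1) :=
  ⟨(toAdd x).val, by
    dsimp only
    rw [← ofAdd_nsmul, nsmul_one, ZMod.natCast_zmod_val, ofAdd_toAdd]⟩

theorem map_apply_eq_of_mem_powers {H G G' : Type*} [Monoid H] [Group G] [Group G']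
    {φ : H →* MulAut G} {φ' : H →* MulAut G'} {ψ : G → G'} {h x : H}
    (hψ : ∀ g, ψ (φ h g) = φ' h (ψ g)) (hx : x ∈ Submonoid.powers h) (g : G) :
    ψ (φ x g) = φ' x (ψ g) := by
  obtain ⟨n, rfl⟩ := hx
  induction n generalizing g with
  | zero => simp
  | succ n ih => simp only [pow_succ, map_mul, MulAut.mul_apply, hψ, ih]

theorem stmt9_general (p : ℕ) [Fact p.Prime]
    {G G' : Type*} [CommGroup G] [CommGroup G']
    (φ : Multiplicative (ZMod p) →* MulAut G)
    (φ' : Multiplicative (ZMod p) →* MulAut G')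
    (m m' : Fin p → ℕ)
    (T : (∀ l : Fin p, Fin (m l) → Fin ((l : ℕ) + 1) → ZMod p) →
         (∀ l : Fin p, Fin (m l) → Fin ((l : ℕ) + 1) → ZMod p))
    (hT : ∀ v l i j, T v l i j
      = v l i j + if h : (j : ℕ) + 1 < (l : ℕ) + 1 then v l i ⟨(j : ℕ) + 1, h⟩ else 0)
    (T' : (∀ l : Fin p, Fin (m' l) → Fin ((l : ℕ) + 1) → ZMod p) →
          (∀ l : Fin p, Fin (m' l) → Fin ((l : ℕ) + 1) → ZMod p))
    (hT' : ∀ v l i j, T' v l i j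
      = v l i j + if h : (j : ℕ) + 1 < (l : ℕ) + 1 then v l i ⟨(j : ℕ) + 1, h⟩ else 0)
    (e : G ≃* Multiplicative (∀ l : Fin p, Fin (m l) → Fin ((l : ℕ) + 1) → ZMod p))
    (he : ∀ g, e (φ (Multiplicative.ofAdd 1) g)
      = Multiplicative.ofAdd (T (Multiplicative.toAdd (e g))))
    (e' : G' ≃* Multiplicative (∀ l : Fin p, Fin (m' l) → Fin ((l : ℕ) + 1) → ZMod p))
    (he' : ∀ g, e' (φ' (Multiplicative.ofAdd 1) g)
      = Multiplicative.ofAdd (T' (Multiplicative.toAdd (e' g))))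
    (hiso : Nonempty ((G ⋊[φ] Multiplicative (ZMod p)) ≃* (G' ⋊[φ'] Multiplicative (ZMod p)))) :
    m = m' ∧ ∃ ψ : G ≃* G', ∀ (x : Multiplicative (ZMod p)) (g : G), ψ (φ x g) = φ' x (ψ g) := by
  obtain ⟨f⟩ := hiso
  have hp : p.Prime := Fact.out
  have : NeZero p := ⟨hp.ne_zero⟩
  have hgen : ∀ x : Multiplicative (ZMod p), x ∈ Submonoid.powers (ofAdd 1) :=
    ZMod.mem_powers_ofAdd_one
  have hm : m = m' := by
    refine eq_of_sum_mul_tsub_eq fun k => ?_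
    have hcard := SemidirectProduct.card_divIdFiltration_congr hgen hgen f k
    rw [JordanBlocks.card_divIdFiltration e (JordanBlocks.toAdd_div_eq_shift hT he),
      JordanBlocks.card_divIdFiltration e' (JordanBlocks.toAdd_div_eq_shift hT' he'),
      Nat.card_zmod] at hcard
    exact Nat.pow_right_injective hp.two_le hcard
  subst hm
  have hTT : T' = T := by
    funext v l i j
    rw [hT, hT']
  refine ⟨rfl, e.trans e'.symm, fun x => map_apply_eq_of_mem_powers (fun g => ?_) (hgen x)⟩
  apply e'.injective
  simp [he, he', hTT]

/-- let `G, G'` be finite `𝔽_p[C_p]`-modules (elementary abelian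
`p`-groups with `C_p`-actions `φ, φ'`), with Krull–Schmidt decompositions
`G ≅ ⊕_l R_l^{m_l}` and `G' ≅ ⊕_l R_l^{m'_l}`, where `R_l` is modelled by
`Fin l → ZMod p` with the generator `t` acting as a unipotent Jordan block `T`.
If `G ⋊ C_p ≅ G' ⋊ C_p` as groups then `m_l = m'_l` for all `l`, and hence
`G ≅ G'` as `C_p`-modules. -/
theorem stmt9 (p : ℕ) [Fact p.Prime]
    {G G' : Type*} [CommGroup G] [CommGroup G'] [Fintype G] [Fintype G']
    (φ : Multiplicative (ZMod p) →* MulAut G)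
    (φ' : Multiplicative (ZMod p) →* MulAut G')
    (m m' : Fin p → ℕ)
    (T : (∀ l : Fin p, Fin (m l) → Fin ((l : ℕ) + 1) → ZMod p) →
         (∀ l : Fin p, Fin (m l) → Fin ((l : ℕ) + 1) → ZMod p))
    (hT : ∀ v l i j, T v l i j
      = v l i j + if h : (j : ℕ) + 1 < (l : ℕ) + 1 then v l i ⟨(j : ℕ) + 1, h⟩ else 0)
    (T' : (∀ l : Fin p, Fin (m' l) → Fin ((l : ℕ) + 1) → ZMod p) →
          (∀ l : Fin p, Fin (m' l) → Fin ((l : ℕ) + 1) → ZMod p))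
    (hT' : ∀ v l i j, T' v l i j
      = v l i j + if h : (j : ℕ) + 1 < (l : ℕ) + 1 then v l i ⟨(j : ℕ) + 1, h⟩ else 0)
    (e : G ≃* Multiplicative (∀ l : Fin p, Fin (m l) → Fin ((l : ℕ) + 1) → ZMod p))
    (he : ∀ g, e (φ (Multiplicative.ofAdd 1) g)
      = Multiplicative.ofAdd (T (Multiplicative.toAdd (e g))))
    (e' : G' ≃* Multiplicative (∀ l : Fin p, Fin (m' l) → Fin ((l : ℕ) + 1) → ZMod p))
    (he' : ∀ g, e' (φ' (Multiplicative.ofAdd 1) g)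
      = Multiplicative.ofAdd (T' (Multiplicative.toAdd (e' g))))
    (hiso : Nonempty ((G ⋊[φ] Multiplicative (ZMod p)) ≃* (G' ⋊[φ'] Multiplicative (ZMod p)))) :
    m = m' ∧ ∃ ψ : G ≃* G', ∀ (x : Multiplicative (ZMod p)) (g : G), ψ (φ x g) = φ' x (ψ g) :=
  stmt9_general p φ φ' m m' T hT T' hT' e he e' he' hiso
end
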